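/- arXiv:1604.07676 — 4 statements merged into one kernel-verified Lean document; each statement's English description precedes it below -/
import Mathlib

section
/- For all integers k ≥ 2 and l ≥ 2 and all real θ with 0 < |θ| ≤ π/4, one has 1 + (cos θ)^(2k+2l) + (sin θ)^(2k+2l) − (cos θ)^(2k) − (sin θ)^(2k) − (cos θ)^(2l) − (sin θ)^(2l) > 0. -/
open Real

theorem stmt_0 (k l : ℕ) (hk : 2 ≤ k) (hl : 2 ≤ l) (θ : ℝ)
    (hθ0 : 0 < |θ|) (hθ1 : |θ| ≤ π / 4) :
    0 < 1 + (Real.cos θ) ^ (2 * k + 2 * l) + (Real.sin θ) ^ (2 * k + 2 * l)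
      - (Real.cos θ) ^ (2 * k) - (Real.sin θ) ^ (2 * k)
      - (Real.cos θ) ^ (2 * l) - (Real.sin θ) ^ (2 * l) := by
  have hpi := Real.pi_pos
  have habs := abs_le.mp hθ1
  have hθne : θ ≠ 0 := by
    intro h; rw [h, abs_zero] at hθ0; exact lt_irrefl 0 hθ0
  have hcpos : 0 < Real.cos θ := by
    apply Real.cos_pos_of_mem_Ioo
    constructor <;> [nlinarith [habs.1]; nlinarith [habs.2]]
  have hsne : Real.sin θ ≠ 0 := by
    intro h
    exact hθne ((Real.sin_eq_zero_iff_of_lt_of_lt (by nlinarith [habs.1])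
      (by nlinarith [habs.2])).mp h)
  set a : ℝ := Real.cos θ ^ 2 with hadef
  set b : ℝ := Real.sin θ ^ 2 with hbdef
  have ha : 0 < a := by positivity
  have hb : 0 < b := by positivity
  have hab : b + a = 1 := Real.sin_sq_add_cos_sq θ
  have ha1 : a ≤ 1 := by linarith
  have hb1 : b ≤ 1 := by linarith
  have hak : a ^ k ≤ a ^ 2 := pow_le_pow_of_le_one ha.le ha1 hk
  have hal : a ^ l ≤ a ^ 2 := pow_le_pow_of_le_one ha.le ha1 hl
  have hbk : b ^ k ≤ b ^ 2 := pow_le_pow_of_le_one hb.le hb1 hk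
  have hbl : b ^ l ≤ b ^ 2 := pow_le_pow_of_le_one hb.le hb1 hl
  have ha2 : a ^ 2 ≤ 1 := by nlinarith
  have hb2 : b ^ 2 ≤ 1 := by nlinarith
  have h1 : (1 - a ^ 2) * (1 - a ^ 2) ≤ (1 - a ^ k) * (1 - a ^ l) :=
    mul_le_mul (by linarith) (by linarith) (by linarith) (by linarith)
  have h2 : (1 - b ^ 2) * (1 - b ^ 2) ≤ (1 - b ^ k) * (1 - b ^ l) :=
    mul_le_mul (by linarith) (by linarith) (by linarith) (by linarith)
  have hrw : 2 * k + 2 * l = 2 * (k + l) := by ring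
  rw [hrw, pow_mul, pow_mul, pow_mul, pow_mul, pow_mul, pow_mul, ← hadef, ← hbdef,
    pow_add, pow_add]
  have h3 : (1 - a ^ 2) * (1 - a ^ 2) + (1 - b ^ 2) * (1 - b ^ 2) - 1 = 2 * (a * b) ^ 2 := by
    have hba : b = 1 - a := by linarith
    rw [hba]; ring
  nlinarith [h1, h2, h3, mul_pos ha hb, sq_nonneg (a * b), pow_pos (mul_pos ha hb) 2]
end

section
/- Let β : (0, π/4] → ℝ be a measurable nonnegative function, not almost everywhere zero, such that θ ↦ β(θ)·θ² is integrable on (0, π/4]. Define λ_n = ∫_{0}^{π/4} β(θ)(1 − (sin θ)^{2n} − (cos θ)^{2n}) dθ for n ∈ ℕ. Then for all integers k, l ≥ 2, λ_k + λ_l > λ_{k+l}. -/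
/-!
Write `a = sin² θ`, so that `cos² θ = 1 - a`. Since `(1 - a^k)(1 - a^l) = 1 - a^k - a^l + a^(k+l)`,
the integrand of `λ_k + λ_l - λ_{k+l}` is `β` times
`(1 - a^k)(1 - a^l) + (1 - b^k)(1 - b^l) - 1` with `b = 1 - a`; for `k, l ≥ 2` this is at least
`(1 - a²)² + (1 - b²)² - 1 = 2a²b² > 0`. Bernoulli's inequality gives
`0 ≤ 1 - a^n - b^n ≤ n a ≤ n θ²`, which makes every `λ_n` an honest integral, so the gap is the
integral of `β` against a positive function, and it is positive because `β ≥ 0` is not a.e. zero.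
-/

open Real MeasureTheory

lemma one_sub_pow_sub_one_sub_pow_nonneg {a : ℝ} (ha₀ : 0 ≤ a) (ha₁ : a ≤ 1) {n : ℕ}
    (hn : n ≠ 0) : 0 ≤ 1 - a ^ n - (1 - a) ^ n := by
  have ha : a ^ n ≤ a := pow_le_of_le_one ha₀ ha₁ hn
  have hb : (1 - a) ^ n ≤ 1 - a := pow_le_of_le_one (by linarith) (by linarith) hn
  linarith

lemma one_sub_pow_sub_one_sub_pow_le {a : ℝ} (ha₀ : 0 ≤ a) (ha₁ : a ≤ 1) (n : ℕ) :
    1 - a ^ n - (1 - a) ^ n ≤ n * a := by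
  have hbernoulli : 1 + n * (-a) ≤ (1 + -a) ^ n := one_add_mul_le_pow (by linarith) n
  have ha : 0 ≤ a ^ n := pow_nonneg ha₀ n
  rw [← sub_eq_add_neg] at hbernoulli
  linarith

lemma one_sub_pow_sub_one_sub_pow_add_lt {a : ℝ} (ha₀ : 0 < a) (ha₁ : a < 1) {k l : ℕ}
    (hk : 2 ≤ k) (hl : 2 ≤ l) :
    1 - a ^ (k + l) - (1 - a) ^ (k + l) <
      (1 - a ^ k - (1 - a) ^ k) + (1 - a ^ l - (1 - a) ^ l) := by
  set b := 1 - a with hb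
  have hb₀ : 0 < b := by linarith
  have hb₁ : b < 1 := by linarith
  have hak : a ^ k ≤ a ^ 2 := pow_le_pow_of_le_one ha₀.le ha₁.le hk
  have hal : a ^ l ≤ a ^ 2 := pow_le_pow_of_le_one ha₀.le ha₁.le hl
  have hbk : b ^ k ≤ b ^ 2 := pow_le_pow_of_le_one hb₀.le hb₁.le hk
  have hbl : b ^ l ≤ b ^ 2 := pow_le_pow_of_le_one hb₀.le hb₁.le hl
  have ha₂ : a ^ 2 ≤ 1 := pow_le_one₀ ha₀.le ha₁.le
  have hb₂ : b ^ 2 ≤ 1 := pow_le_one₀ hb₀.le hb₁.le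
  have hprod_a : (1 - a ^ 2) * (1 - a ^ 2) ≤ (1 - a ^ k) * (1 - a ^ l) :=
    mul_le_mul (by linarith) (by linarith) (by linarith) (by linarith)
  have hprod_b : (1 - b ^ 2) * (1 - b ^ 2) ≤ (1 - b ^ k) * (1 - b ^ l) :=
    mul_le_mul (by linarith) (by linarith) (by linarith) (by linarith)
  have hsquares : (1 - a ^ 2) * (1 - a ^ 2) + (1 - b ^ 2) * (1 - b ^ 2) - 1 =
      2 * a ^ 2 * b ^ 2 := by
    rw [hb]; ring
  have hpos : 0 < 2 * a ^ 2 * b ^ 2 := by positivity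
  rw [pow_add, pow_add]
  nlinarith

noncomputable def sinCosDefect (n : ℕ) (θ : ℝ) : ℝ :=
  1 - sin θ ^ (2 * n) - cos θ ^ (2 * n)

lemma sinCosDefect_eq (n : ℕ) (θ : ℝ) :
    sinCosDefect n θ = 1 - (sin θ ^ 2) ^ n - (1 - sin θ ^ 2) ^ n := by
  rw [sinCosDefect, pow_mul, pow_mul, cos_sq']

lemma continuous_sinCosDefect (n : ℕ) : Continuous (sinCosDefect n) := by
  unfold sinCosDefect
  fun_prop

lemma sinCosDefect_nonneg {n : ℕ} (hn : n ≠ 0) (θ : ℝ) : 0 ≤ sinCosDefect n θ := by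
  rw [sinCosDefect_eq]
  exact one_sub_pow_sub_one_sub_pow_nonneg (sq_nonneg _) (sin_sq_le_one θ) hn

lemma sinCosDefect_le (n : ℕ) (θ : ℝ) : sinCosDefect n θ ≤ n * θ ^ 2 := by
  rw [sinCosDefect_eq]
  calc 1 - (sin θ ^ 2) ^ n - (1 - sin θ ^ 2) ^ n ≤ n * sin θ ^ 2 :=
        one_sub_pow_sub_one_sub_pow_le (sq_nonneg _) (sin_sq_le_one θ) n
    _ ≤ n * θ ^ 2 := mul_le_mul_of_nonneg_left sin_sq_le_sq n.cast_nonneg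

lemma sinCosDefect_add_lt {θ : ℝ} (hθ₀ : 0 < θ) (hθ₁ : θ < π / 2) {k l : ℕ}
    (hk : 2 ≤ k) (hl : 2 ≤ l) :
    sinCosDefect (k + l) θ < sinCosDefect k θ + sinCosDefect l θ := by
  have hsin : 0 < sin θ := sin_pos_of_pos_of_lt_pi hθ₀ (by linarith [pi_pos])
  have hcos : 0 < cos θ := cos_pos_of_mem_Ioo ⟨by linarith, hθ₁⟩
  have hsin_lt : sin θ ^ 2 < 1 := by nlinarith [sin_sq_add_cos_sq θ]
  simp only [sinCosDefect_eq]
  exact one_sub_pow_sub_one_sub_pow_add_lt (by positivity) hsin_lt hk hl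

lemma MeasureTheory.Integrable.mul_sinCosDefect {μ : Measure ℝ} {β : ℝ → ℝ} (hβ : Measurable β)
    (hint : Integrable (fun θ => β θ * θ ^ 2) μ) {n : ℕ} (hn : n ≠ 0) :
    Integrable (fun θ => β θ * sinCosDefect n θ) μ := by
  refine (hint.norm.const_mul n).mono'
    (hβ.aestronglyMeasurable.mul (continuous_sinCosDefect n).aestronglyMeasurable)
    (ae_of_all _ fun θ => ?_)
  rw [norm_mul, norm_mul, Real.norm_of_nonneg (sinCosDefect_nonneg hn θ),
    Real.norm_of_nonneg (sq_nonneg θ)]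
  calc ‖β θ‖ * sinCosDefect n θ ≤ ‖β θ‖ * (n * θ ^ 2) := by
        gcongr; exact sinCosDefect_le n θ
    _ = n * (‖β θ‖ * θ ^ 2) := by ring

lemma setIntegral_mul_pos {α : Type*} [MeasurableSpace α] {μ : Measure α} {s : Set α}
    {f g : α → ℝ} (hs : MeasurableSet s) (hf : ∀ x ∈ s, 0 ≤ f x)
    (hf₀ : ¬ f =ᵐ[μ.restrict s] 0) (hg : ∀ x ∈ s, 0 < g x)
    (hfg : IntegrableOn (fun x => f x * g x) s μ) :
    0 < ∫ x in s, f x * g x ∂μ := by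
  have hnonneg : 0 ≤ᵐ[μ.restrict s] fun x => f x * g x :=
    (ae_restrict_mem hs).mono fun x hx => mul_nonneg (hf x hx) (hg x hx).le
  rw [setIntegral_pos_iff_support_of_nonneg_ae hnonneg hfg]
  have hsupport : Function.support (fun x => f x * g x) ∩ s = Function.support f ∩ s := by
    ext x
    constructor
    · rintro ⟨hx, hxs⟩
      exact ⟨left_ne_zero_of_mul hx, hxs⟩
    · rintro ⟨hx, hxs⟩
      exact ⟨mul_ne_zero hx (hg x hxs).ne', hxs⟩
  rw [hsupport, ← Measure.restrict_apply' hs, pos_iff_ne_zero]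
  simpa [Filter.EventuallyEq, ae_iff, Function.support] using hf₀

theorem stmt_1 (β : ℝ → ℝ) (hmeas : Measurable β)
    (hnonneg : ∀ θ ∈ Set.Ioc (0 : ℝ) (π / 4), 0 ≤ β θ)
    (hne : ¬ (β =ᵐ[volume.restrict (Set.Ioc (0 : ℝ) (π / 4))] 0))
    (hint : IntegrableOn (fun θ => β θ * θ ^ 2) (Set.Ioc (0 : ℝ) (π / 4)))
    (lam : ℕ → ℝ)
    (hlam : ∀ n : ℕ, lam n =
      ∫ θ in Set.Ioc (0 : ℝ) (π / 4),
        β θ * (1 - (Real.sin θ) ^ (2 * n) - (Real.cos θ) ^ (2 * n)))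
    (k l : ℕ) (hk : 2 ≤ k) (hl : 2 ≤ l) :
    lam (k + l) < lam k + lam l := by
  set S := Set.Ioc (0 : ℝ) (π / 4)
  have hlam' (n : ℕ) : lam n = ∫ θ in S, β θ * sinCosDefect n θ := hlam n
  have hint_k := hint.mul_sinCosDefect hmeas (n := k) (by omega)
  have hint_l := hint.mul_sinCosDefect hmeas (n := l) (by omega)
  have hint_kl := hint.mul_sinCosDefect hmeas (n := k + l) (by omega)
  have hint_k_add_l : IntegrableOn (fun θ => β θ * sinCosDefect k θ + β θ * sinCosDefect l θ) S :=
    hint_k.add hint_l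
  have hgap : ∀ θ ∈ S, 0 < sinCosDefect k θ + sinCosDefect l θ - sinCosDefect (k + l) θ :=
    fun θ hθ => sub_pos.2 <| sinCosDefect_add_lt hθ.1 (by linarith [hθ.2, pi_pos]) hk hl
  have hpos := setIntegral_mul_pos measurableSet_Ioc hnonneg hne hgap <| by
    simp only [mul_sub, mul_add]
    exact hint_k_add_l.sub hint_kl
  simp only [mul_sub, mul_add] at hpos
  rw [integral_sub hint_k_add_l hint_kl, integral_add hint_k hint_l, ← hlam', ← hlam', ← hlam'] at hpos
  linarith
end

section
/- For every integer n ≥ 2 and every real u with 0 < u < 2, the sum over integers l with n/2 < l ≤ n − 1 of (2n)! / ((2n−2l)!·(2l)!) · (u/n)^{2n−2l} · (1 − u/n)^{2l} is at most 4·u². -/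
/-!
Put `x = u / n` and `y = 1 - u / n`, so that `x, y ≥ 0` and `x + y = 1`. The sum runs over the
even-indexed terms `C(2n, k) x^(2n-k) y^k` of `(x + y)^(2n)` with at least two factors `x`.
Splitting off two of them, `C(2n, k) ≤ C(2n, 2) C(2n-2, k)` bounds such a partial sum by
`C(2n, 2) x² (x + y)^(2n-2) = n (2n-1) (u/n)² ≤ 2u²`.
-/

open Finset

theorem Nat.choose_le_choose_mul_choose_sub {m k r : ℕ} (h : k + r ≤ m) :
    m.choose k ≤ m.choose r * (m - r).choose k := by
  have hmul := Nat.choose_mul (n := m) (k := m - k) (s := r) (by omega)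
  rw [Nat.choose_symm (by omega), show m - k - r = m - r - k by omega,
    Nat.choose_symm (by omega)] at hmul
  calc m.choose k ≤ m.choose k * (m - k).choose r :=
        Nat.le_mul_of_pos_right _ (Nat.choose_pos (by omega))
    _ = m.choose r * (m - r).choose k := hmul

section Binomial

variable {R : Type*} [CommSemiring R] [PartialOrder R] [IsOrderedRing R] {x y : R} {m : ℕ}

theorem sum_choose_mul_pow_le_add_pow (hx : 0 ≤ x) (hy : 0 ≤ y) {s : Finset ℕ}
    (hs : ∀ k ∈ s, k ≤ m) :
    ∑ k ∈ s, (m.choose k : R) * x ^ (m - k) * y ^ k ≤ (x + y) ^ m := by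
  rw [add_comm, add_pow]
  calc ∑ k ∈ s, (m.choose k : R) * x ^ (m - k) * y ^ k
      = ∑ k ∈ s, y ^ k * x ^ (m - k) * (m.choose k : R) := sum_congr rfl fun _ _ => by ring
    _ ≤ ∑ k ∈ range (m + 1), y ^ k * x ^ (m - k) * (m.choose k : R) :=
        sum_le_sum_of_subset_of_nonneg (fun k hk => mem_range.2 (Nat.lt_succ_of_le (hs k hk)))
          fun _ _ _ => by positivity

theorem sum_choose_mul_pow_le_of_add_le (hx : 0 ≤ x) (hy : 0 ≤ y) {r : ℕ} {s : Finset ℕ}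
    (hs : ∀ k ∈ s, k + r ≤ m) :
    ∑ k ∈ s, (m.choose k : R) * x ^ (m - k) * y ^ k
      ≤ m.choose r * x ^ r * (x + y) ^ (m - r) := by
  have hterm : ∀ k ∈ s, (m.choose k : R) * x ^ (m - k) * y ^ k
      ≤ m.choose r * x ^ r * ((m - r).choose k * x ^ (m - r - k) * y ^ k) := by
    intro k hk
    have hchoose : (m.choose k : R) ≤ m.choose r * (m - r).choose k := by
      simpa using Nat.mono_cast (α := R) (Nat.choose_le_choose_mul_choose_sub (hs k hk))
    rw [show m - k = r + (m - r - k) by have := hs k hk; omega, pow_add]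
    calc (m.choose k : R) * (x ^ r * x ^ (m - r - k)) * y ^ k
        = m.choose k * (x ^ r * x ^ (m - r - k) * y ^ k) := by ring
      _ ≤ m.choose r * (m - r).choose k * (x ^ r * x ^ (m - r - k) * y ^ k) :=
          mul_le_mul_of_nonneg_right hchoose (by positivity)
      _ = _ := by ring
  calc _ ≤ ∑ k ∈ s, m.choose r * x ^ r * ((m - r).choose k * x ^ (m - r - k) * y ^ k) :=
        sum_le_sum hterm
    _ = m.choose r * x ^ r * ∑ k ∈ s, ((m - r).choose k * x ^ (m - r - k) * y ^ k) :=
        (mul_sum ..).symm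
    _ ≤ _ := mul_le_mul_of_nonneg_left
        (sum_choose_mul_pow_le_add_pow hx hy fun k hk => by have := hs k hk; omega)
        (by positivity)

end Binomial

theorem stmt_3 (n : ℕ) (hn : 2 ≤ n) (u : ℝ) (hu0 : 0 < u) (hu2 : u < 2) :
    ∑ l ∈ Finset.Ioc (n / 2) (n - 1),
        ((Nat.factorial (2 * n) : ℝ) /
          ((Nat.factorial (2 * n - 2 * l)) * (Nat.factorial (2 * l)))) *
        (u / n) ^ (2 * n - 2 * l) * (1 - u / n) ^ (2 * l)
      ≤ 4 * u ^ 2 := by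
  have hn0 : (0 : ℝ) < n := by positivity
  have hx : 0 ≤ u / n := by positivity
  have hy : 0 ≤ 1 - u / n :=
    sub_nonneg.2 ((div_le_one hn0).2 (hu2.le.trans (by exact_mod_cast hn)))
  calc _ = ∑ k ∈ (Ioc (n / 2) (n - 1)).image (2 * ·),
          ((2 * n).choose k : ℝ) * (u / n) ^ (2 * n - k) * (1 - u / n) ^ k := by
        rw [sum_image fun a _ b _ h => by simpa using h]
        refine sum_congr rfl fun l hl => ?_
        rw [Nat.cast_choose ℝ (by simp only [mem_Ioc] at hl; omega), mul_comm ((2 * l).factorial : ℝ)]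
    _ ≤ (2 * n).choose 2 * (u / n) ^ 2 * (u / n + (1 - u / n)) ^ (2 * n - 2) :=
        sum_choose_mul_pow_le_of_add_le hx hy fun k hk => by
          simp only [mem_image, mem_Ioc] at hk
          omega
    _ ≤ 4 * u ^ 2 := by
        rw [add_sub_cancel, one_pow, mul_one, Nat.cast_choose_two, div_pow]
        field_simp
        push_cast
        nlinarith [sq_nonneg u]
end

section
/- For every s with 0 < s ≤ 2 there exists a constant C > 0 such that for all integers n ≥ 2 and all integers l with 2 ≤ l ≤ n/2: ∫_0^{1/l} (log(1/x))^{2/s−1} x^{n−l−1} (1−x)^l dx ≤ C·2^{−n}·(log l)^{2/s−1}. -/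
open Real MeasureTheory

lemma aux_nat (l n : ℕ) (hl : 2 ≤ l) (hn : 2 * l ≤ n) : 2 ^ (n - 2) ≤ l ^ (n - l) := by
  have h4 : 4 ^ (l - 1) ≤ l ^ l := by
    match l, hl with
    | 2, _ => norm_num
    | 3, _ => norm_num
    | (k+4), _ =>
      calc 4 ^ (k+4-1) ≤ (k+4) ^ (k+4-1) := Nat.pow_le_pow_left (by omega) _
      _ ≤ (k+4) ^ (k+4) := Nat.pow_le_pow_right (by omega) (by omega)
  calc 2 ^ (n-2) = 2 ^ (n - 2*l) * 2 ^ (2*(l-1)) := by rw [← pow_add]; congr 1; omega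
  _ = 2 ^ (n - 2*l) * 4 ^ (l-1) := by rw [pow_mul]; norm_num
  _ ≤ l ^ (n - 2*l) * l ^ l := Nat.mul_le_mul (Nat.pow_le_pow_left hl _) h4
  _ = l ^ (n - l) := by rw [← pow_add]; congr 1; omega

lemma log_rpow_bound (a : ℝ) (ha : 0 ≤ a) :
    ∃ K > 0, ∀ t : ℝ, 1 ≤ t → (Real.log t) ^ a ≤ K * t ^ (1/2 : ℝ) := by
  rcases eq_or_lt_of_le ha with h | h
  · exact ⟨1, one_pos, fun t ht => by
      rw [← h, rpow_zero, one_mul]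
      exact Real.one_le_rpow ht (by norm_num)⟩
  · refine ⟨(2*a)^a, rpow_pos_of_pos (by linarith) a, fun t ht => ?_⟩
    have ht0 : 0 < t := lt_of_lt_of_le one_pos ht
    set ε : ℝ := 1/(2*a) with hε
    have hε0 : 0 < ε := by positivity
    have h1 : ε * Real.log t ≤ t ^ ε - 1 := by
      rw [← Real.log_rpow ht0]
      exact Real.log_le_sub_one_of_pos (rpow_pos_of_pos ht0 ε)
    have h4 : (2*a) * ε = 1 := by rw [hε]; field_simp
    have hlog : Real.log t ≤ t ^ ε * (2*a) := by
      have h3 : (2*a) * (ε * Real.log t) ≤ (2*a) * t^ε :=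
        mul_le_mul_of_nonneg_left (by linarith) (by linarith)
      calc Real.log t = (2*a) * ε * Real.log t := by rw [h4, one_mul]
      _ = (2*a) * (ε * Real.log t) := by ring
      _ ≤ (2*a) * t^ε := h3
      _ = t^ε * (2*a) := by ring
    calc (Real.log t)^a ≤ (t^ε * (2*a))^a := rpow_le_rpow (Real.log_nonneg ht) hlog ha
    _ = (t^ε)^a * (2*a)^a := mul_rpow (by positivity) (by positivity)
    _ = t^(1/2:ℝ) * (2*a)^a := by
        have he : ε * a = 1/2 := by
          rw [hε]; rw [div_mul_eq_mul_div, one_mul, div_eq_div_iff (by linarith) (by norm_num)]; ring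
        rw [← Real.rpow_mul ht0.le, he]
    _ = (2*a)^a * t^(1/2:ℝ) := mul_comm _ _

theorem stmt_16 (s : ℝ) (hs0 : 0 < s) (hs2 : s ≤ 2) :
    ∃ C > 0, ∀ n l : ℕ, 2 ≤ n → 2 ≤ l → 2 * l ≤ n →
      ∫ x in Set.Ioc (0 : ℝ) (1 / (l : ℝ)),
          (Real.log (1 / x)) ^ (2 / s - 1) * x ^ (n - l - 1) * (1 - x) ^ l
        ≤ C * (2 : ℝ) ^ (-(n : ℝ)) * (Real.log l) ^ (2 / s - 1) := by
  set a : ℝ := 2 / s - 1 with ha_def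
  have ha : 0 ≤ a := by
    have : 1 ≤ 2 / s := (one_le_div hs0).mpr hs2
    simp only [ha_def]; linarith
  obtain ⟨K, hK, hKb⟩ := log_rpow_bound a ha
  have hlog2 : (0:ℝ) < Real.log 2 := Real.log_pos (by norm_num)
  have hlog2a : (0:ℝ) < (Real.log 2) ^ a := rpow_pos_of_pos hlog2 a
  refine ⟨4 * K / (Real.log 2) ^ a, div_pos (by linarith) hlog2a, fun n l hn hl hln => ?_⟩
  have hl2 : (2:ℝ) ≤ (l:ℝ) := by exact_mod_cast hl
  have hl0 : (0:ℝ) < (l:ℝ) := by linarith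
  set b : ℝ := 1 / (l:ℝ) with hb_def
  have hb0 : 0 < b := by positivity
  have hb2 : b ≤ 1/2 := by
    rw [hb_def, div_le_div_iff₀ hl0 (by norm_num)]; linarith
  set m : ℕ := n - l - 1 with hm_def
  have hm1 : l ≤ m + 1 := by omega
  have hml : m + 1 = n - l := by omega
  set r : ℝ := (m:ℝ) - 1/2 with hr_def
  have hm0' : (1:ℝ) ≤ (m:ℝ) := by exact_mod_cast (by omega : 1 ≤ m)
  have hr0 : (0:ℝ) < r := by rw [hr_def]; linarith
  -- pointwise bound
  have hpt : ∀ x ∈ Set.Ioc (0:ℝ) b,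
      (Real.log (1 / x)) ^ a * x ^ m * (1 - x) ^ l ≤ K * x ^ r := by
    intro x hx
    obtain ⟨hx0, hxb⟩ := hx
    have hx1 : x ≤ 1/2 := le_trans hxb hb2
    have h1x : (1:ℝ) ≤ 1 / x := by
      rw [le_div_iff₀ hx0]; linarith
    have hlb : (Real.log (1/x)) ^ a ≤ K * (1/x) ^ (1/2:ℝ) := hKb _ h1x
    have h1mx : (1 - x) ^ l ≤ 1 := pow_le_one₀ (by linarith) (by linarith)
    have hxm : (0:ℝ) ≤ x ^ m := pow_nonneg hx0.le m
    have key : (1/x) ^ (1/2:ℝ) * x ^ m = x ^ r := by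
      rw [one_div, Real.inv_rpow hx0.le, ← Real.rpow_neg hx0.le,
        ← Real.rpow_natCast x m, ← Real.rpow_add hx0, hr_def]
      congr 1; ring
    calc (Real.log (1 / x)) ^ a * x ^ m * (1 - x) ^ l
        ≤ (Real.log (1 / x)) ^ a * x ^ m * 1 := by
          apply mul_le_mul_of_nonneg_left h1mx
          exact mul_nonneg (rpow_nonneg (Real.log_nonneg h1x) a) hxm
      _ = (Real.log (1 / x)) ^ a * x ^ m := mul_one _
      _ ≤ (K * (1/x) ^ (1/2:ℝ)) * x ^ m := mul_le_mul_of_nonneg_right hlb hxm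
      _ = K * ((1/x) ^ (1/2:ℝ) * x ^ m) := by ring
      _ = K * x ^ r := by rw [key]
  -- integrability of majorant
  have hgint : IntegrableOn (fun x => K * x ^ r) (Set.Ioc (0:ℝ) b) := by
    have h := intervalIntegral.intervalIntegrable_rpow' (a := 0) (b := b)
      (by linarith : (-1:ℝ) < r)
    rw [intervalIntegrable_iff_integrableOn_Ioc_of_le hb0.le] at h
    exact h.const_mul K
  have hfnn : ∀ x ∈ Set.Ioc (0:ℝ) b,
      0 ≤ (Real.log (1/x)) ^ a * x ^ m * (1-x) ^ l := by
    rintro x ⟨hx0, hxb⟩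
    have hx1 : x ≤ 1/2 := le_trans hxb hb2
    have h1x : (1:ℝ) ≤ 1/x := by rw [le_div_iff₀ hx0]; linarith
    exact mul_nonneg (mul_nonneg (rpow_nonneg (Real.log_nonneg h1x) a)
      (pow_nonneg hx0.le m)) (pow_nonneg (by linarith) l)
  have hmeas : AEStronglyMeasurable
      (fun x => (Real.log (1/x)) ^ a * x ^ m * (1-x) ^ l)
      (volume.restrict (Set.Ioc (0:ℝ) b)) := by
    apply ContinuousOn.aestronglyMeasurable _ measurableSet_Ioc
    intro x hx
    apply ContinuousAt.continuousWithinAt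
    obtain ⟨hx0, hxb⟩ := hx
    have hx1 : x ≤ 1/2 := le_trans hxb hb2
    have h2x : (2:ℝ) ≤ 1/x := by rw [le_div_iff₀ hx0]; linarith
    have c1 : ContinuousAt (fun y : ℝ => 1/y) x :=
      continuousAt_const.div continuousAt_id hx0.ne'
    have c2 : ContinuousAt Real.log (1/x) := Real.continuousAt_log (by positivity)
    have c23 : ContinuousAt (fun y : ℝ => Real.log (1/y)) x := c2.comp c1
    have c3 : ContinuousAt (fun y : ℝ => (Real.log (1/y)) ^ a) x :=
      c23.rpow_const (Or.inl (Real.log_pos (by linarith)).ne')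
    exact (c3.mul (continuous_pow m).continuousAt).mul
      ((continuous_const.sub continuous_id).pow l).continuousAt
  have hfint : IntegrableOn
      (fun x => (Real.log (1/x)) ^ a * x ^ m * (1-x) ^ l) (Set.Ioc (0:ℝ) b) := by
    apply hgint.mono' hmeas
    rw [ae_restrict_iff' measurableSet_Ioc]
    filter_upwards with x hx
    rw [Real.norm_eq_abs, abs_of_nonneg (hfnn x hx)]
    exact hpt x hx
  have hIle : (∫ x in Set.Ioc (0:ℝ) b, (Real.log (1/x))^a * x^m * (1-x)^l)
      ≤ ∫ x in Set.Ioc (0:ℝ) b, K * x ^ r :=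
    setIntegral_mono_on hfint hgint measurableSet_Ioc hpt
  have hIg : (∫ x in Set.Ioc (0:ℝ) b, K * x ^ r) = K * (b ^ (r+1) / (r+1)) := by
    rw [← intervalIntegral.integral_of_le hb0.le,
      intervalIntegral.integral_const_mul,
      integral_rpow (Or.inl (by linarith : (-1:ℝ) < r)),
      Real.zero_rpow (by positivity : (0:ℝ) < r + 1).ne']
    ring
  -- arithmetic
  have h_sqrt : (l:ℝ) ^ (1/2:ℝ) ≤ r + 1 := by
    rw [← Real.sqrt_eq_rpow]
    have h1 : (l:ℝ) ≤ ((l:ℝ) - 1/2)^2 := by nlinarith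
    have h2 := Real.sqrt_le_sqrt h1
    rw [Real.sqrt_sq (by linarith)] at h2
    have h3 : (l:ℝ) ≤ (m:ℝ) + 1 := by exact_mod_cast hm1
    rw [hr_def]; linarith
  have hb_pow : b ^ (r + 1) ≤ b ^ (m+1) * (r + 1) := by
    have hlb : (l:ℝ) ^ (1/2:ℝ) = b ^ (-(1/2):ℝ) := by
      rw [hb_def, one_div (l:ℝ), Real.inv_rpow hl0.le, ← Real.rpow_neg hl0.le, neg_neg]
    have e1 : b ^ (r+1 : ℝ) = b ^ (m+1) * (l:ℝ) ^ (1/2:ℝ) := by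
      rw [hlb, ← Real.rpow_natCast b (m+1), ← Real.rpow_add hb0]
      congr 1
      rw [hr_def]; push_cast; ring
    rw [e1]
    exact mul_le_mul_of_nonneg_left h_sqrt (pow_nonneg hb0.le _)
  have hb_2n : b ^ (m+1) ≤ 4 * (2:ℝ) ^ (-(n:ℝ)) := by
    have hnat : 2 ^ n ≤ 4 * l ^ (n - l) := by
      have h := aux_nat l n hl hln
      have : 2 ^ n = 4 * 2 ^ (n - 2) := by
        rw [(by norm_num : (4:ℕ) = 2^2), ← pow_add]
        congr 1; omega
      omega
    have hcast : (2:ℝ)^n ≤ 4 * (l:ℝ)^(n - l) := by exact_mod_cast hnat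
    have h2n : (2:ℝ) ^ (-(n:ℝ)) = ((2:ℝ)^n)⁻¹ := by
      rw [← Real.rpow_natCast 2 n, ← Real.rpow_neg (by norm_num)]
    have hlp : (0:ℝ) < (l:ℝ)^(n-l) := pow_pos hl0 _
    have h2p : (0:ℝ) < (2:ℝ)^n := by positivity
    have hb_eq : b ^ (m+1) = ((l:ℝ)^(n-l))⁻¹ := by
      rw [hb_def, one_div (l:ℝ), inv_pow, hml]
    rw [hb_eq, h2n, (by rw [one_div] : ((l:ℝ)^(n-l))⁻¹ = 1/((l:ℝ)^(n-l))),
      (by ring : 4 * ((2:ℝ)^n)⁻¹ = 4 / (2:ℝ)^n), div_le_div_iff₀ hlp h2p]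
    linarith
  have h2nn : (0:ℝ) ≤ (2:ℝ) ^ (-(n:ℝ)) := Real.rpow_nonneg (by norm_num) _
  calc (∫ x in Set.Ioc (0:ℝ) b, (Real.log (1/x))^a * x^m * (1-x)^l)
      ≤ K * (b ^ (r+1) / (r+1)) := hIle.trans (le_of_eq hIg)
    _ ≤ K * b ^ (m+1) := by
        apply mul_le_mul_of_nonneg_left _ hK.le
        rw [div_le_iff₀ (by linarith : (0:ℝ) < r+1)]
        exact hb_pow
    _ ≤ K * (4 * (2:ℝ)^(-(n:ℝ))) := mul_le_mul_of_nonneg_left hb_2n hK.le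
    _ = (4 * K / (Real.log 2)^a) * (2:ℝ)^(-(n:ℝ)) * (Real.log 2)^a := by
        field_simp
    _ ≤ (4 * K / (Real.log 2)^a) * (2:ℝ)^(-(n:ℝ)) * (Real.log (l:ℝ))^a := by
        apply mul_le_mul_of_nonneg_left
        · exact Real.rpow_le_rpow hlog2.le (Real.log_le_log (by norm_num) hl2) ha
        · exact mul_nonneg (div_nonneg (by linarith) hlog2a.le) h2nn
end
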